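/- Let 1 ≤ p < ∞ and let Y be a closed G-invariant linear subspace of L^p(μ). Then the set of elements of Y that have a continuous representative is dense in Y with respect to the L^p-norm. -/

import Mathlib

/-!
Since `μ` is invariant, `G` acts on `L^p(μ)` by isometries `α • f = f(α • ·)`, and this action is
strongly continuous. Averaging `α • f` over a small neighbourhood `V` of `1` in `G`, against a
right-invariant Haar probability measure `ρ`, gives an element of `Y` (a closed convex `G`-invariant
set) that is close to `f`. The average has a continuous representative: for continuous `h`, the
average of its translates is continuous with sup norm at most `ρ(V)⁻¹ ‖h‖₁ ≤ ρ(V)⁻¹ ‖h‖_p`, because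
transitivity makes `∫ h(α • x) dρ(α) = ∫ h dμ` for every `x`. So averaging extends from the dense
subspace of continuous functions to a bounded map `L^p(μ) → C(X)`.
-/

open MeasureTheory ProbabilityTheory Filter Topology
open scoped ENNReal NNReal

theorem dist_integral_le_of_ae_dist_le {Ω E : Type*} [MeasurableSpace Ω] {ν : Measure Ω}
    [IsProbabilityMeasure ν] [NormedAddCommGroup E] [NormedSpace ℝ E] {F F' : Ω → E}
    (hF : Integrable F ν) (hF' : Integrable F' ν) {r : ℝ}
    (h : ∀ᵐ ω ∂ν, dist (F ω) (F' ω) ≤ r) : dist (∫ ω, F ω ∂ν) (∫ ω, F' ω ∂ν) ≤ r := by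
  rw [dist_eq_norm, ← integral_sub hF hF']
  simpa using norm_integral_le_of_norm_le_const (h.mono fun ω hω => by rwa [← dist_eq_norm])

theorem MeasureTheory.Lp.integral_norm_le_norm {X E : Type*} [MeasurableSpace X]
    [NormedAddCommGroup E] {μ : Measure X} [IsProbabilityMeasure μ] {p : ℝ≥0∞} [Fact (1 ≤ p)]
    (u : Lp E p μ) : ∫ x, ‖u x‖ ∂μ ≤ ‖u‖ := by
  rw [integral_norm_eq_lintegral_enorm (Lp.aestronglyMeasurable u),
    ← eLpNorm_one_eq_lintegral_enorm, Lp.norm_def]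
  exact ENNReal.toReal_mono (Lp.eLpNorm_ne_top u)
    (eLpNorm_le_eLpNorm_of_exponent_le Fact.out (Lp.aestronglyMeasurable u))

theorem ProbabilityTheory.cond_le_smul {Ω : Type*} [MeasurableSpace Ω] {μ : Measure Ω}
    {s : Set Ω} (hs : μ s ≠ 0) : μ[|s] ≤ (μ s)⁻¹.toNNReal • μ := by
  rw [ENNReal.smul_def, ENNReal.coe_toNNReal (ENNReal.inv_ne_top.2 hs), cond]
  gcongr
  exact Measure.restrict_le_self

theorem mem_range_of_comp_eq_comp_of_denseRange {C E D F : Type*} [PseudoMetricSpace E]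
    [PseudoMetricSpace D] [CompleteSpace D] [TopologicalSpace F] [T2Space F]
    {i : C → E} (hi : DenseRange i) {J : C → D} {K : ℝ≥0}
    (hJ : ∀ h h', dist (J h) (J h') ≤ K * dist (i h) (i h'))
    {j : D → F} (hj : Continuous j) {A : E → F} (hA : Continuous A) (hAJ : A ∘ i = j ∘ J)
    (e : E) : A e ∈ Set.range j := by
  obtain ⟨u, hu⟩ : ∃ u : ℕ → C, Tendsto (i ∘ u) atTop (𝓝 e) := by
    obtain ⟨v, hv, hve⟩ := mem_closure_iff_seq_limit.1 (hi e)
    choose u hu using hv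
    exact ⟨u, by simpa [Function.comp_def, hu] using hve⟩
  have hJu : CauchySeq (J ∘ u) := by
    refine Metric.cauchySeq_iff'.2 fun ε hε => ?_
    obtain ⟨N, hN⟩ := Metric.cauchySeq_iff'.1 hu.cauchySeq (ε / (K + 1)) (by positivity)
    refine ⟨N, fun n hn => (hJ _ _).trans_lt ?_⟩
    calc K * dist (i (u n)) (i (u N)) ≤ K * (ε / (K + 1)) := by gcongr; exact (hN n hn).le
      _ < ε := by rw [mul_div_assoc', div_lt_iff₀ (by positivity)]; nlinarith [K.2]
  obtain ⟨d, hd⟩ := cauchySeq_tendsto_of_complete hJu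
  refine ⟨d, tendsto_nhds_unique ((hj.tendsto d).comp hd) ?_⟩
  rw [← Function.comp_assoc, ← hAJ]
  exact (hA.tendsto e).comp hu

theorem smulInvariantMeasure_of_integral_comp_smul_eq
    {G X : Type*} [Group G] [TopologicalSpace X] [CompactSpace X] [T2Space X]
    [MeasurableSpace X] [BorelSpace X] [MulAction G X] [ContinuousConstSMul G X]
    (μ : Measure X) [μ.Regular]
    (h : ∀ (f : C(X, ℝ)) (α : G), ∫ x, f (α • x) ∂μ = ∫ x, f x ∂μ) :
    SMulInvariantMeasure G X μ := by
  refine ((smulInvariantMeasure_tfae G μ).out 0 5).2 fun α => ?_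
  have : (μ.map (α • ·)).Regular := Measure.Regular.map (Homeomorph.smul α)
  refine Measure.ext_of_integral_eq_on_compactlySupported fun f => ?_
  rw [integral_map (continuous_const_smul α).aemeasurable (map_continuous f).aestronglyMeasurable]
  exact h f.toContinuousMap α

/- The orbit integral `x ↦ ∫ h(α • x) dρ(α)` is `G`-invariant by right invariance of `ρ`, hence
constant by transitivity; integrating it against `μ` and swapping the integrals gives `∫ h dμ`. -/
theorem integral_apply_smul_eq_integral
    {G X E : Type*} [Group G] [TopologicalSpace G] [IsTopologicalGroup G] [CompactSpace G]
    [MeasurableSpace G] [BorelSpace G] [TopologicalSpace X] [CompactSpace X] [MeasurableSpace X]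
    [BorelSpace X] [MulAction G X] [ContinuousSMul G X] [MulAction.IsPretransitive G X]
    [NormedAddCommGroup E] [NormedSpace ℝ E] [CompleteSpace E]
    (μ : Measure X) [IsProbabilityMeasure μ] [SMulInvariantMeasure G X μ]
    (ρ : Measure G) [IsProbabilityMeasure ρ] [ρ.IsMulRightInvariant] (h : C(X, E)) (x : X) :
    ∫ α, h (α • x) ∂ρ = ∫ y, h y ∂μ := by
  set m : X → E := fun x => ∫ α, h (α • x) ∂ρ
  have hm : ∀ y, m y = m x := by
    intro y
    obtain ⟨β, rfl⟩ := MulAction.exists_smul_eq G x y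
    simpa [m, mul_smul] using integral_mul_right_eq_self (μ := ρ) (fun α => h (α • x)) β
  calc m x = ∫ y, m y ∂μ := by rw [integral_congr_ae (.of_forall hm)]; simp
    _ = ∫ α, ∫ y, h (α • y) ∂μ ∂ρ :=
      integral_integral_swap_of_hasCompactSupport (by fun_prop)
        (HasCompactSupport.of_compactSpace _)
    _ = ∫ y, h y ∂μ := by simp [integral_smul_eq_self]

namespace ContinuousMap

variable {G X E : Type*} [Group G] [TopologicalSpace G] [TopologicalSpace X] [MulAction G X]
  [ContinuousSMul G X]

def compSMul [TopologicalSpace E] (h : C(X, E)) : C(G, C(X, E)) :=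
  (h.comp ⟨fun q : G × X => q.1 • q.2, continuous_smul⟩).curry

variable [MeasurableSpace G] [OpensMeasurableSpace G] [CompactSpace G] [CompactSpace X]
  [NormedAddCommGroup E] (ν : Measure G) [IsFiniteMeasure ν]

theorem integrable_compSMul (h : C(X, E)) : Integrable h.compSMul ν :=
  (map_continuous _).integrable_of_hasCompactSupport (HasCompactSupport.of_compactSpace _)

variable [NormedSpace ℝ E]

noncomputable def smulAverage (h : C(X, E)) : C(X, E) := ∫ α, h.compSMul α ∂ν

theorem smulAverage_sub (h h' : C(X, E)) :
    smulAverage ν (h - h') = smulAverage ν h - smulAverage ν h' := by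
  rw [smulAverage, smulAverage, smulAverage,
    ← integral_sub (integrable_compSMul ν h) (integrable_compSMul ν h')]
  rfl

variable [CompleteSpace E]

theorem smulAverage_apply (h : C(X, E)) (x : X) :
    smulAverage ν h x = ∫ α, h (α • x) ∂ν :=
  integral_apply (integrable_compSMul ν h) x

theorem norm_smulAverage_le [IsTopologicalGroup G] [BorelSpace G] [MeasurableSpace X]
    [BorelSpace X] [MulAction.IsPretransitive G X]
    (μ : Measure X) [IsProbabilityMeasure μ] [SMulInvariantMeasure G X μ]
    (ρ : Measure G) [IsProbabilityMeasure ρ] [ρ.IsMulRightInvariant] {c : ℝ≥0} (hν : ν ≤ c • ρ)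
    (h : C(X, E)) : ‖smulAverage ν h‖ ≤ c * ∫ x, ‖h x‖ ∂μ := by
  refine (norm_le _ (by positivity)).2 fun x => ?_
  have hint : Integrable (fun α => ‖h (α • x)‖) (c • ρ) :=
    (by fun_prop : Continuous fun α : G => ‖h (α • x)‖).integrable_of_hasCompactSupport
      (HasCompactSupport.of_compactSpace _)
  calc ‖smulAverage ν h x‖ ≤ ∫ α, ‖h (α • x)‖ ∂ν := by
        rw [smulAverage_apply]; exact norm_integral_le_integral_norm _
    _ ≤ ∫ α, ‖h (α • x)‖ ∂(c • ρ) :=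
        integral_mono_measure hν (.of_forall fun _ => norm_nonneg _) hint
    _ = c * ∫ y, ‖h y‖ ∂μ := by
        rw [integral_smul_nnreal_measure]
        exact congrArg _ (integral_apply_smul_eq_integral μ ρ ⟨fun y => ‖h y‖, by fun_prop⟩ x)

end ContinuousMap

namespace MeasureTheory.Lp

variable {G X E : Type*} [Group G] [TopologicalSpace G] [MeasurableSpace G]
  [OpensMeasurableSpace G] [TopologicalSpace X] [R1Space X] [MeasurableSpace X] [BorelSpace X]
  [MulAction G X] [ContinuousSMul G X] [NormedAddCommGroup E] {μ : Measure X} [IsFiniteMeasure μ]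
  [μ.Regular] [SMulInvariantMeasure G X μ] {p : ℝ≥0∞} [Fact (1 ≤ p)] [Fact (p ≠ ∞)]

theorem continuous_domSMul (u : Lp E p μ) : Continuous fun α : G => DomMulAct.mk α • u :=
  DomMulAct.continuous_mk.smul continuous_const

theorem integrable_domSMul [CompactSpace G] (ν : Measure G) [IsFiniteMeasure ν] (u : Lp E p μ) :
    Integrable (fun α : G => DomMulAct.mk α • u) ν :=
  (continuous_domSMul u).integrable_of_hasCompactSupport (HasCompactSupport.of_compactSpace _)

theorem lipschitzWith_integral_domSMul [CompactSpace G] [NormedSpace ℝ E] (ν : Measure G)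
    [IsProbabilityMeasure ν] : LipschitzWith 1 fun u : Lp E p μ => ∫ α, DomMulAct.mk α • u ∂ν :=
  LipschitzWith.of_dist_le_mul fun u v => by
    simpa using dist_integral_le_of_ae_dist_le (integrable_domSMul ν u) (integrable_domSMul ν v)
      (.of_forall fun α => (DomMulAct.dist_smul_Lp (DomMulAct.mk α) u v).le)

end MeasureTheory.Lp

namespace ContinuousMap

variable {G X E : Type*} [Group G] [TopologicalSpace G] [TopologicalSpace X] [CompactSpace X]
  [MeasurableSpace X] [BorelSpace X] [MulAction G X] [ContinuousSMul G X]
  [NormedAddCommGroup E] [NormedSpace ℝ E] [SecondCountableTopologyEither X E]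
  {μ : Measure X} [IsFiniteMeasure μ] [SMulInvariantMeasure G X μ] {p : ℝ≥0∞} [Fact (1 ≤ p)]

theorem toLp_compSMul (h : C(X, E)) (α : G) :
    toLp p μ ℝ (h.compSMul α) = DomMulAct.mk α • toLp p μ ℝ h := by
  refine Lp.ext ((coeFn_toLp μ _).trans ?_)
  refine EventuallyEq.trans ?_ (DomMulAct.smul_Lp_ae_eq _ _).symm
  exact ((measurePreserving_smul α μ).quasiMeasurePreserving.ae_eq_comp
    (coeFn_toLp (p := p) (𝕜 := ℝ) μ h)).symm

theorem toLp_smulAverage [MeasurableSpace G] [OpensMeasurableSpace G] [CompactSpace G]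
    [CompleteSpace E] (ν : Measure G) [IsFiniteMeasure ν] (h : C(X, E)) :
    toLp p μ ℝ (smulAverage ν h) = ∫ α, DomMulAct.mk α • toLp p μ ℝ h ∂ν := by
  rw [smulAverage, ← ContinuousLinearMap.integral_comp_comm _ (integrable_compSMul ν h)]
  simp_rw [toLp_compSMul]

end ContinuousMap

namespace MeasureTheory.Lp

variable {G X E : Type*} [Group G] [TopologicalSpace G] [IsTopologicalGroup G] [CompactSpace G]
  [MeasurableSpace G] [BorelSpace G] [TopologicalSpace X] [CompactSpace X] [T2Space X]
  [MeasurableSpace X] [BorelSpace X] [MulAction G X] [ContinuousSMul G X]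
  [MulAction.IsPretransitive G X] [NormedAddCommGroup E] [NormedSpace ℝ E] [CompleteSpace E]
  [SecondCountableTopologyEither X E] {μ : Measure X} [IsProbabilityMeasure μ] [μ.Regular]
  [SMulInvariantMeasure G X μ] {p : ℝ≥0∞} [Fact (1 ≤ p)] [Fact (p ≠ ∞)]

theorem integral_domSMul_mem_range_toLp (ρ : Measure G) [IsProbabilityMeasure ρ]
    [ρ.IsMulRightInvariant] (ν : Measure G) [IsProbabilityMeasure ν] {c : ℝ≥0} (hν : ν ≤ c • ρ)
    (u : Lp E p μ) : ∫ α, DomMulAct.mk α • u ∂ν ∈ Set.range (ContinuousMap.toLp p μ ℝ) := by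
  refine mem_range_of_comp_eq_comp_of_denseRange
    (ContinuousMap.toLp_denseRange E μ (p := p) ℝ Fact.out)
    (J := ContinuousMap.smulAverage ν) (K := c) (fun h h' => ?_)
    (ContinuousMap.toLp p μ ℝ).continuous (lipschitzWith_integral_domSMul ν).continuous
    (funext fun h => (ContinuousMap.toLp_smulAverage ν h).symm) u
  calc dist (ContinuousMap.smulAverage ν h) (ContinuousMap.smulAverage ν h')
      = ‖ContinuousMap.smulAverage ν (h - h')‖ := by
        rw [ContinuousMap.smulAverage_sub, _root_.dist_eq_norm]
    _ ≤ c * ∫ x, ‖(h - h') x‖ ∂μ := ContinuousMap.norm_smulAverage_le ν μ ρ hν _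
    _ = c * ∫ x, ‖ContinuousMap.toLp p μ ℝ (h - h') x‖ ∂μ := by
        congr 1
        exact integral_congr_ae ((ContinuousMap.coeFn_toLp μ (h - h')).symm.fun_comp norm)
    _ ≤ c * ‖ContinuousMap.toLp p μ ℝ (h - h')‖ := by gcongr; exact integral_norm_le_norm _
    _ = c * dist (ContinuousMap.toLp p μ ℝ h) (ContinuousMap.toLp p μ ℝ h') := by
        rw [map_sub, _root_.dist_eq_norm]

theorem exists_integral_domSMul_mem_range_toLp_dist_lt (u : Lp E p μ) {ε : ℝ} (hε : 0 < ε) :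
    ∃ ν : Measure G, IsProbabilityMeasure ν ∧
      ∫ α, DomMulAct.mk α • u ∂ν ∈ Set.range (ContinuousMap.toLp p μ ℝ) ∧
      dist (∫ α, DomMulAct.mk α • u ∂ν) u < ε := by
  let ρ : Measure G := (Measure.haarMeasure ⊤).inv
  have : IsProbabilityMeasure ρ := ⟨by
    simpa [ρ, Measure.inv_apply] using
      Measure.haarMeasure_self (K₀ := (⊤ : TopologicalSpace.PositiveCompacts G))⟩
  let V : Set G := {α | dist (DomMulAct.mk α • u) u < ε / 2}
  have hV : IsOpen V := isOpen_lt ((continuous_domSMul u).dist continuous_const) continuous_const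
  have hρV : ρ V ≠ 0 := (hV.measure_pos ρ ⟨1, by simp [V, hε]⟩).ne'
  have : IsProbabilityMeasure ρ[|V] := cond_isProbabilityMeasure hρV
  refine ⟨ρ[|V], this, integral_domSMul_mem_range_toLp ρ ρ[|V] (cond_le_smul hρV) u, ?_⟩
  calc dist (∫ α, DomMulAct.mk α • u ∂ρ[|V]) u
      = dist (∫ α, DomMulAct.mk α • u ∂ρ[|V]) (∫ _, u ∂ρ[|V]) := by simp
    _ ≤ ε / 2 := dist_integral_le_of_ae_dist_le (integrable_domSMul _ u) (integrable_const u)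
        ((ae_cond_mem hV.measurableSet).mono fun α hα => hα.le)
    _ < ε := half_lt_self hε

end MeasureTheory.Lp

/-- Let `1 ≤ p < ∞` and let `Y` be a closed `G`-invariant linear subspace of
`L^p(μ)`. Then the set of elements of `Y` having a continuous representative is dense in `Y`
for the `L^p`-norm. -/
theorem continuous_representatives_dense
    {X : Type*} [TopologicalSpace X] [CompactSpace X] [T2Space X]
    [MeasurableSpace X] [BorelSpace X]
    {G : Type*} [Group G] [TopologicalSpace G] [IsTopologicalGroup G] [CompactSpace G]
    [MulAction G X] [ContinuousSMul G X] [MulAction.IsPretransitive G X]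
    (μ : Measure X) [IsProbabilityMeasure μ] [μ.Regular]
    (hinv : ∀ (f : C(X, ℂ)) (α : G), ∫ x, f x ∂μ = ∫ x, f (α • x) ∂μ)
    (p : ℝ≥0∞) [Fact (1 ≤ p)] (hp : p ≠ ∞)
    (Y : Submodule ℂ (Lp ℂ p μ)) (hYclosed : IsClosed (Y : Set (Lp ℂ p μ)))
    (hYinv : ∀ f ∈ Y, ∀ α : G, ∀ g : Lp ℂ p μ, (⇑g =ᵐ[μ] fun x => f (α • x)) → g ∈ Y) :
    ∀ f ∈ Y, f ∈ closure {g : Lp ℂ p μ | g ∈ Y ∧ ∃ h : C(X, ℂ), ⇑g =ᵐ[μ] ⇑h} := by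
  intro f hf
  borelize G
  have : Fact (p ≠ ∞) := ⟨hp⟩
  have : SMulInvariantMeasure G X μ := smulInvariantMeasure_of_integral_comp_smul_eq μ fun h α => by
    have := hinv ((ContinuousMap.mk ((↑) : ℝ → ℂ) Complex.continuous_ofReal).comp h) α
    simp only [ContinuousMap.comp_apply, ContinuousMap.coe_mk] at this
    exact_mod_cast this.symm
  refine Metric.mem_closure_iff.2 fun ε hε => ?_
  obtain ⟨ν, _, ⟨h, hh⟩, hdist⟩ :=
    Lp.exists_integral_domSMul_mem_range_toLp_dist_lt (G := G) f hε
  refine ⟨_, ⟨?_, h, hh ▸ ContinuousMap.coeFn_toLp μ h⟩, by rwa [dist_comm]⟩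
  refine (Y.restrictScalars ℝ).convex.integral_mem hYclosed (.of_forall fun α => ?_)
    (Lp.integrable_domSMul _ f)
  exact hYinv f hf α _ (DomMulAct.smul_Lp_ae_eq (DomMulAct.mk α) f)
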